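/- (From E-expansion to the associated polynomial, Proposition 3.5) Let g₀,…,g_ℓ : Ω → L be such that each g_i is modular of weight k−2i and type m−i for Γ (i.e. g_i |_{k−2i,m−i} γ = g_i for all γ ∈ Γ), and set f := Σ_{h=0}^{ℓ} g_h·E^h. Then f is quasi-modular of weight k, type m and depth ≤ ℓ for Γ with coefficient family (f₀,…,f_ℓ) given by f_i = (−π)^{−i} · Σ_{h=i}^{ℓ} (h choose i) g_h·E^{h−i}. -/

import Mathlib

/-! Slashing is multiplicative, so modularity of each `g_h` and the functional equation of `E`
give `f |_{k,m} γ = ∑ g_h (E - c/(π(cz+d)))^h`; expanding binomially and collecting powers of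
`c/(cz+d)` yields the coefficients `f_i`. -/

noncomputable section

namespace DrinfeldQM

variable {L : Type*} [Field L]

/-- Entry `(i,j)` of `γ ∈ GL₂(F)`, viewed inside `L`. -/
def Mc (F : Subfield L) (γ : GL (Fin 2) F) (i j : Fin 2) : L :=
  ((γ : Matrix (Fin 2) (Fin 2) F) i j : L)

/-- Determinant of `γ ∈ GL₂(F)`, viewed inside `L`. -/
def detL (F : Subfield L) (γ : GL (Fin 2) F) : L :=
  ((γ : Matrix (Fin 2) (Fin 2) F).det : L)

/-- Automorphy factor `cz + d`. -/
def jf (F : Subfield L) (γ : GL (Fin 2) F) (z : L) : L :=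
  Mc F γ 1 0 * z + Mc F γ 1 1

/-- Fractional linear action of `GL₂(F)` on `L` (restricting to `Ω`). -/
def act (F : Subfield L) (γ : GL (Fin 2) F) (z : L) : L :=
  (Mc F γ 0 0 * z + Mc F γ 0 1) / jf F γ z

/-- The Drinfeld upper half plane `Ω = L ∖ F`. -/
def Omega (F : Subfield L) : Set L := {z | z ∉ F}

/-- The slash operator `f |_{k,m} γ` of weight `k` and type `m`. -/
def slash (F : Subfield L) (k m : ℤ) (f : L → L) (γ : GL (Fin 2) F) : L → L :=
  fun z => detL F γ ^ m * jf F γ z ^ (-k) * f (act F γ z)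

/-- `f` is quasi-modular of weight `k`, type `m` and depth `≤ ℓ` for the set `S ⊆ GL₂(F)`
with coefficient family `fam` (only the indices `0,…,ℓ` of `fam` are relevant). -/
def IsQM (F : Subfield L) (S : Set (GL (Fin 2) F)) (k m : ℤ) (ℓ : ℕ)
    (f : L → L) (fam : ℕ → L → L) : Prop :=
  Set.EqOn (fam 0) f (Omega F) ∧
    ∀ γ ∈ S, ∀ z ∈ Omega F,
      slash F k m f γ z =
        ∑ i ∈ Finset.range (ℓ + 1), fam i z * (Mc F γ 1 0 / jf F γ z) ^ i

/-- The coefficient family of the `i`-th coefficient `f_i` of a quasi-modular function with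
coefficient family `fam`:  `(f_i)_h = ((h+i) choose i) · f_{h+i}`. -/
def shiftFam (i : ℕ) (fam : ℕ → L → L) : ℕ → L → L :=
  fun h z => ((h + i).choose i : L) * fam (h + i) z

/-- The double-slash operator `f ∥_{k,m} γ` of a quasi-modular function of depth `≤ ℓ` with
coefficient family `fam`. -/
def dslash (F : Subfield L) (k m : ℤ) (ℓ : ℕ) (fam : ℕ → L → L)
    (γ : GL (Fin 2) F) : L → L :=
  fun z => ∑ i ∈ Finset.range (ℓ + 1),
    (-(Mc F γ 1 0) / jf F γ z) ^ i * detL F γ ^ (m - (i : ℤ)) *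
      jf F γ z ^ (2 * (i : ℤ) - k) * fam i (act F γ z)

/-- The double-slash operator on polynomial-valued functions `P : Ω → L[X]`:
`(P ∥_{k,m} γ)(z, X) = (det γ)^m (cz+d)^{-k} P(γ·z, ((cz+d)²/det γ)(X - c/(cz+d)))`. -/
def pdslash (F : Subfield L) (k m : ℤ) (P : L → Polynomial L)
    (γ : GL (Fin 2) F) : L → Polynomial L :=
  fun z =>
    Polynomial.C (detL F γ ^ m * jf F γ z ^ (-k)) *
      (P (act F γ z)).comp
        (Polynomial.C (jf F γ z ^ 2 / detL F γ) *
          (Polynomial.X - Polynomial.C (Mc F γ 1 0 / jf F γ z)))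

/-- The associated polynomial `P_f(z, X) = ∑_{i=0}^{ℓ} f_i(z) Xⁱ`. -/
def assocPoly (ℓ : ℕ) (fam : ℕ → L → L) : L → Polynomial L :=
  fun z => ∑ i ∈ Finset.range (ℓ + 1), Polynomial.C (fam i z) * Polynomial.X ^ i

/-- `E` satisfies the functional equation of the false Eisenstein series (weight 2, type 1,
depth 1, coefficient family `(E, -π⁻¹)`) for all `γ ∈ S`. -/
def EFunEq (F : Subfield L) (S : Set (GL (Fin 2) F)) (π : L) (E : L → L) : Prop :=
  ∀ γ ∈ S, ∀ z ∈ Omega F,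
    E (act F γ z) =
      (detL F γ)⁻¹ * jf F γ z ^ 2 * (E z - Mc F γ 1 0 / (π * jf F γ z))

theorem sum_mul_add_pow_eq_sum_mul_pow {R : Type*} [CommSemiring R] (ℓ : ℕ) (a : ℕ → R)
    (x y : R) :
    ∑ h ∈ Finset.range (ℓ + 1), a h * (x + y) ^ h =
      ∑ i ∈ Finset.range (ℓ + 1),
        (∑ h ∈ Finset.range (ℓ - i + 1), ((h + i).choose i : R) * a (h + i) * x ^ h) * y ^ i := by
  calc ∑ h ∈ Finset.range (ℓ + 1), a h * (x + y) ^ h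
      = ∑ h ∈ Finset.range (ℓ + 1), ∑ i ∈ Finset.range (h + 1),
          ((h - i + i).choose i : R) * a (h - i + i) * x ^ (h - i) * y ^ i := by
        refine Finset.sum_congr rfl fun h _ => ?_
        rw [add_comm x, add_pow, Finset.mul_sum]
        refine Finset.sum_congr rfl fun i hi => ?_
        rw [Nat.sub_add_cancel (Finset.mem_range_succ_iff.mp hi)]
        ring
    _ = ∑ i ∈ Finset.range (ℓ + 1), ∑ h ∈ Finset.range (ℓ + 1 - i),
          ((h + i).choose i : R) * a (h + i) * x ^ h * y ^ i :=
        Finset.sum_range_diag_flip (ℓ + 1) fun i h =>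
          ((h + i).choose i : R) * a (h + i) * x ^ h * y ^ i
    _ = _ := by
        refine Finset.sum_congr rfl fun i hi => ?_
        rw [Finset.sum_mul, Nat.sub_add_comm (Finset.mem_range_succ_iff.mp hi)]

theorem neg_div_mul_pow {K : Type*} [Field K] (a b c : K) (n : ℕ) :
    (-(a / (b * c))) ^ n = (-b) ^ (-(n : ℤ)) * (a / c) ^ n := by
  rw [zpow_neg, zpow_natCast, ← inv_pow, ← mul_pow]
  ring

variable {F : Subfield L}

theorem detL_eq (γ : GL (Fin 2) F) :
    detL F γ = Mc F γ 0 0 * Mc F γ 1 1 - Mc F γ 0 1 * Mc F γ 1 0 := by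
  rw [detL, Matrix.det_fin_two]
  push_cast
  rfl

theorem detL_ne_zero (γ : GL (Fin 2) F) : detL F γ ≠ 0 := by
  rw [detL, ne_eq, ZeroMemClass.coe_eq_zero]
  exact ((Matrix.isUnit_iff_isUnit_det _).mp γ.isUnit).ne_zero

theorem jf_ne_zero (γ : GL (Fin 2) F) {z : L} (hz : z ∈ Omega F) : jf F γ z ≠ 0 := by
  intro h0
  rw [jf] at h0
  by_cases hc : Mc F γ 1 0 = 0
  · rw [hc, zero_mul, zero_add] at h0
    exact detL_ne_zero γ (by rw [detL_eq, h0, hc]; ring)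
  · have hz' : z = -Mc F γ 1 1 / Mc F γ 1 0 := by
      rw [eq_div_iff hc]
      linear_combination h0
    exact hz (hz' ▸ F.div_mem (F.neg_mem (SetLike.coe_mem _)) (SetLike.coe_mem _))

theorem slash_sum {ι : Type*} (s : Finset ι) (k m : ℤ) (f : ι → L → L) (γ : GL (Fin 2) F)
    (z : L) :
    slash F k m (fun z => ∑ i ∈ s, f i z) γ z = ∑ i ∈ s, slash F k m (f i) γ z :=
  Finset.mul_sum _ _ _

theorem slash_mul (k₁ k₂ m₁ m₂ : ℤ) (f₁ f₂ : L → L) (γ : GL (Fin 2) F) {z : L}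
    (hz : z ∈ Omega F) :
    slash F (k₁ + k₂) (m₁ + m₂) (fun z => f₁ z * f₂ z) γ z =
      slash F k₁ m₁ f₁ γ z * slash F k₂ m₂ f₂ γ z := by
  simp only [slash, zpow_add₀ (detL_ne_zero γ), neg_add, zpow_add₀ (jf_ne_zero γ hz)]
  ring

theorem slash_pow (n : ℕ) (k m : ℤ) (f : L → L) (γ : GL (Fin 2) F) (z : L) :
    slash F (n * k) (n * m) (fun z => f z ^ n) γ z = slash F k m f γ z ^ n := by
  rw [slash, slash, mul_pow, mul_pow, ← zpow_natCast (_ ^ m), ← zpow_natCast (_ ^ (-k)),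
    ← zpow_mul, ← zpow_mul, mul_comm m, neg_mul, mul_comm k]

theorem slash_eq_of_EFunEq {S : Set (GL (Fin 2) F)} {π : L} {E : L → L}
    (hE : EFunEq F S π E) {γ : GL (Fin 2) F} (hγ : γ ∈ S) {z : L} (hz : z ∈ Omega F) :
    slash F 2 1 E γ z = E z - Mc F γ 1 0 / (π * jf F γ z) := by
  rw [slash, hE γ hγ z hz, zpow_one, zpow_neg, zpow_ofNat]
  field_simp [detL_ne_zero γ, jf_ne_zero γ hz]

theorem E_expansion_to_assocPoly_general
    {L : Type*} [Field L] (F : Subfield L) (Γ : Subgroup (GL (Fin 2) F))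
    (π : L) (E : L → L)
    (hE : EFunEq F (Γ : Set (GL (Fin 2) F)) π E)
    (k m : ℤ) (ℓ : ℕ) (g : ℕ → L → L)
    (hg : ∀ i ≤ ℓ, ∀ γ ∈ Γ, ∀ z ∈ Omega F,
      slash F (k - 2 * (i : ℤ)) (m - (i : ℤ)) (g i) γ z = g i z) :
    IsQM F (Γ : Set (GL (Fin 2) F)) k m ℓ
      (fun z => ∑ h ∈ Finset.range (ℓ + 1), g h z * E z ^ h)
      (fun i z => (-π) ^ (-(i : ℤ)) *
        ∑ h ∈ Finset.range (ℓ - i + 1), ((h + i).choose i : L) * g (h + i) z * E z ^ h) := by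
  refine ⟨fun z _ => by simp, fun γ hγ z hz => ?_⟩
  have hterm : ∀ h ∈ Finset.range (ℓ + 1),
      slash F k m (fun z => g h z * E z ^ h) γ z =
        g h z * (E z + -(Mc F γ 1 0 / (π * jf F γ z))) ^ h := by
    intro h hh
    rw [show k = (k - 2 * h) + h * 2 by ring, show m = (m - h) + h * 1 by ring,
      slash_mul _ _ _ _ _ _ γ hz, slash_pow, slash_eq_of_EFunEq hE hγ hz, hg h (Finset.mem_range_succ_iff.mp hh) γ hγ z hz,
      ← sub_eq_add_neg]
  rw [slash_sum, Finset.sum_congr rfl hterm, sum_mul_add_pow_eq_sum_mul_pow]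
  refine Finset.sum_congr rfl fun i _ => ?_
  dsimp only
  rw [neg_div_mul_pow]
  ring

/-- From the E-expansion to the associated polynomial (Proposition 3.5):
if each `gᵢ` is modular of weight `k-2i` and type `m-i`, then `f = ∑ g_h E^h` is
quasi-modular with coefficient family `fᵢ = (-π)^{-i} ∑_{h=i}^{ℓ} (h choose i) g_h E^{h-i}`. -/
theorem E_expansion_to_assocPoly
    {L : Type*} [Field L] (F : Subfield L) (Γ : Subgroup (GL (Fin 2) F))
    (π : L) (hπ : π ≠ 0) (E : L → L)
    (hE : EFunEq F (Γ : Set (GL (Fin 2) F)) π E)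
    (k m : ℤ) (ℓ : ℕ) (g : ℕ → L → L)
    (hg : ∀ i ≤ ℓ, ∀ γ ∈ Γ, ∀ z ∈ Omega F,
      slash F (k - 2 * (i : ℤ)) (m - (i : ℤ)) (g i) γ z = g i z) :
    IsQM F (Γ : Set (GL (Fin 2) F)) k m ℓ
      (fun z => ∑ h ∈ Finset.range (ℓ + 1), g h z * E z ^ h)
      (fun i z => (-π) ^ (-(i : ℤ)) *
        ∑ h ∈ Finset.range (ℓ - i + 1), ((h + i).choose i : L) * g (h + i) z * E z ^ h) :=
  E_expansion_to_assocPoly_general F Γ π E hE k m ℓ g hg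

end DrinfeldQM
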